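/- arXiv:2511.05277 — 3 statements merged into one kernel-verified Lean document; each statement's English description precedes it below -/
import Mathlib

section
/- Let T > 0, γ* ∈ (0,1), λ ∈ (0,1), and let f, k : [0,T] → ℝ be bounded continuous functions with f(0) ≠ 0 and k(0) ≠ 0. Define G(t) = ∫₀ᵗ (t−τ)^{γ*−1} k(t−τ) f(τ) dτ. Then lim_{t→0⁺} G(λt)/G(t) = λ^{γ*}. -/
open MeasureTheory Real Set Filter Topology
open intervalIntegral


lemma base_int {γ t : ℝ} (hγ0 : 0 < γ) :
    IntervalIntegrable (fun τ => (t - τ) ^ (γ - 1)) volume 0 t := by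
  have h := (intervalIntegrable_rpow' (by linarith : (-1:ℝ) < γ - 1) (a := 0) (b := t)).comp_sub_left t
  simpa using h.symm

lemma base_val {γ t : ℝ} (hγ0 : 0 < γ) :
    (∫ τ in (0:ℝ)..t, (t - τ) ^ (γ - 1)) = t ^ γ / γ := by
  rw [intervalIntegral.integral_comp_sub_left (fun x => x ^ (γ - 1)) t]
  simp only [sub_self, sub_zero]
  rw [integral_rpow (Or.inl (by linarith))]
  rw [Real.zero_rpow (by linarith : γ - 1 + 1 ≠ 0)]
  ring_nf

lemma whole_int {T γ : ℝ} {f k : ℝ → ℝ}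
    (hγ0 : 0 < γ)
    (hf : ContinuousOn f (Icc 0 T)) (hk : ContinuousOn k (Icc 0 T))
    {Mf Mk : ℝ}
    (hfb : ∀ x ∈ Icc (0:ℝ) T, |f x| ≤ Mf) (hkb : ∀ x ∈ Icc (0:ℝ) T, |k x| ≤ Mk)
    {t : ℝ} (ht0 : 0 < t) (htT : t ≤ T) :
    IntervalIntegrable (fun τ => (t - τ) ^ (γ - 1) * k (t - τ) * f τ) volume 0 t := by
  rw [intervalIntegrable_iff, uIoc_of_le ht0.le, integrableOn_Ioc_iff_integrableOn_Ioo]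
  have hbase : IntegrableOn (fun τ => (t - τ) ^ (γ - 1)) (Ioo 0 t) volume := by
    have := (base_int hγ0 (t := t)).def'
    rw [uIoc_of_le ht0.le] at this
    exact this.mono_set Ioo_subset_Ioc_self
  have hmaps : ∀ τ ∈ Ioo (0:ℝ) t, t - τ ∈ Icc (0:ℝ) T := fun τ hτ =>
    ⟨by linarith [hτ.2], by linarith [hτ.1]⟩
  have hc : ContinuousOn (fun τ => (t - τ) ^ (γ - 1) * k (t - τ) * f τ) (Ioo 0 t) := by
    apply ContinuousOn.mul
    · apply ContinuousOn.mul
      · apply ContinuousOn.rpow_const ((continuous_const.sub continuous_id).continuousOn)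
        intro x hx; left; show t - x ≠ 0; intro h; linarith [sub_pos.2 hx.2]
      · exact hk.comp ((continuous_const.sub continuous_id).continuousOn) hmaps
    · exact hf.mono (fun x hx => ⟨hx.1.le, by linarith [hx.2]⟩)
  refine Integrable.mono ((hbase.const_mul (Mk * Mf))) (hc.aestronglyMeasurable measurableSet_Ioo) ?_
  refine (ae_restrict_mem measurableSet_Ioo).mono (fun τ hτ => ?_)
  have h1 : (0:ℝ) ≤ (t - τ) ^ (γ - 1) := rpow_nonneg (by linarith [hτ.2]) _
  have h2 := hkb _ (hmaps τ hτ)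
  have h3 := hfb τ ⟨hτ.1.le, by linarith [hτ.2]⟩
  have hMk : 0 ≤ Mk := (abs_nonneg _).trans h2
  have hMf : 0 ≤ Mf := (abs_nonneg _).trans h3
  rw [Real.norm_eq_abs, Real.norm_eq_abs, abs_mul, abs_mul, abs_of_nonneg h1,
    abs_of_nonneg (by positivity : (0:ℝ) ≤ Mk * Mf * (t - τ) ^ (γ - 1))]
  calc (t - τ) ^ (γ - 1) * |k (t - τ)| * |f τ| ≤ (t - τ) ^ (γ - 1) * Mk * Mf := by
        apply mul_le_mul (mul_le_mul le_rfl h2 (abs_nonneg _) h1) h3 (abs_nonneg _)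
        positivity
    _ = Mk * Mf * (t - τ) ^ (γ - 1) := by ring

lemma aux_tendsto {T γ : ℝ} {f k : ℝ → ℝ} (hT : 0 < T) (hγ0 : 0 < γ) (hγ1 : γ < 1)
    (hf : ContinuousOn f (Icc 0 T)) (hk : ContinuousOn k (Icc 0 T))
    {Mf Mk : ℝ}
    (hfb : ∀ x ∈ Icc (0:ℝ) T, |f x| ≤ Mf) (hkb : ∀ x ∈ Icc (0:ℝ) T, |k x| ≤ Mk) :
    Tendsto (fun t => (∫ τ in (0:ℝ)..t, (t - τ) ^ (γ - 1) * k (t - τ) * f τ) / t ^ γ)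
      (𝓝[>] (0:ℝ)) (𝓝 (k 0 * f 0 / γ)) := by
  have h0T : (0:ℝ) ∈ Icc (0:ℝ) T := ⟨le_rfl, hT.le⟩
  have hMk : 0 ≤ Mk := (abs_nonneg _).trans (hkb 0 h0T)
  have hMf : 0 ≤ Mf := (abs_nonneg _).trans (hfb 0 h0T)
  rw [Metric.tendsto_nhdsWithin_nhds]
  intro ε hε
  set c := k 0 * f 0 with hc
  set ε' := γ * ε / 2 with hε'def
  have hε' : 0 < ε' := by positivity
  set ε₁ := ε' / (Mk + Mf + 1) with hε₁def
  have hε₁ : 0 < ε₁ := by positivity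
  obtain ⟨δk, hδk, hδkp⟩ := Metric.continuousWithinAt_iff.1 (hk.continuousWithinAt h0T) ε₁ hε₁
  obtain ⟨δf, hδf, hδfp⟩ := Metric.continuousWithinAt_iff.1 (hf.continuousWithinAt h0T) ε₁ hε₁
  refine ⟨min (min δk δf) T, by positivity, fun t ht hdt => ?_⟩
  simp only [mem_Ioi] at ht
  rw [Real.dist_eq, sub_zero, abs_of_pos ht] at hdt
  have htT : t ≤ T := le_of_lt (lt_of_lt_of_le hdt (min_le_right _ _))
  have htδk : t < δk := lt_of_lt_of_le hdt ((min_le_left _ _).trans (min_le_left _ _))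
  have htδf : t < δf := lt_of_lt_of_le hdt ((min_le_left _ _).trans (min_le_right _ _))
  -- pointwise bound on the product
  have hprod : ∀ τ ∈ Ioc (0:ℝ) t, |k (t - τ) * f τ - c| ≤ ε' := by
    intro τ hτ
    have hu : t - τ ∈ Icc (0:ℝ) T := ⟨by linarith [hτ.2], by linarith [hτ.1]⟩
    have hv : τ ∈ Icc (0:ℝ) T := ⟨hτ.1.le, by linarith [hτ.2]⟩
    have h1 : |k (t - τ) - k 0| < ε₁ := by
      have := hδkp hu (by rw [Real.dist_eq, sub_zero, abs_of_nonneg hu.1]; linarith [hτ.1])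
      rwa [Real.dist_eq] at this
    have h2 : |f τ - f 0| < ε₁ := by
      have := hδfp hv (by rw [Real.dist_eq, sub_zero, abs_of_nonneg hv.1]; linarith [hτ.2])
      rwa [Real.dist_eq] at this
    have key : k (t - τ) * f τ - c = k (t - τ) * (f τ - f 0) + (k (t - τ) - k 0) * f 0 := by
      rw [hc]; ring
    rw [key]
    calc |k (t - τ) * (f τ - f 0) + (k (t - τ) - k 0) * f 0|
        ≤ |k (t - τ)| * |f τ - f 0| + |k (t - τ) - k 0| * |f 0| := by
          refine (abs_add_le _ _).trans ?_; rw [abs_mul, abs_mul]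
      _ ≤ Mk * ε₁ + ε₁ * Mf := by
          have hk' := hkb _ hu
          have hf' := hfb 0 h0T
          nlinarith [abs_nonneg (k (t - τ)), abs_nonneg (k (t - τ) - k 0),
            abs_nonneg (f τ - f 0), abs_nonneg (f 0)]
      _ ≤ ε' := by
          have : (Mk + Mf) * ε₁ ≤ (Mk + Mf + 1) * ε₁ := by nlinarith
          have h3 : (Mk + Mf + 1) * ε₁ = ε' := by
            rw [hε₁def]; field_simp
          nlinarith
  have hGint := whole_int hγ0 hf hk hfb hkb ht htT
  have hbint := base_int (t := t) hγ0
  have htγ : (0:ℝ) < t ^ γ := rpow_pos_of_pos ht γ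
  have hGsub : (∫ τ in (0:ℝ)..t, (t - τ) ^ (γ - 1) * k (t - τ) * f τ) - c * (t ^ γ / γ)
      = ∫ τ in (0:ℝ)..t, ((t - τ) ^ (γ - 1) * k (t - τ) * f τ - (t - τ) ^ (γ - 1) * c) := by
    rw [intervalIntegral.integral_sub hGint (hbint.mul_const c),
      intervalIntegral.integral_mul_const, base_val hγ0]
    ring
  have hbound : |(∫ τ in (0:ℝ)..t, (t - τ) ^ (γ - 1) * k (t - τ) * f τ) - c * (t ^ γ / γ)|
      ≤ ε' * (t ^ γ / γ) := by
    rw [hGsub]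
    have hae : ∀ᵐ τ ∂(volume.restrict (Set.uIoc (0:ℝ) t)),
        ‖(t - τ) ^ (γ - 1) * k (t - τ) * f τ - (t - τ) ^ (γ - 1) * c‖
          ≤ (t - τ) ^ (γ - 1) * ε' := by
      refine (ae_restrict_mem measurableSet_uIoc).mono (fun τ hτ => ?_)
      rw [uIoc_of_le ht.le] at hτ
      have h1 : (0:ℝ) ≤ (t - τ) ^ (γ - 1) := rpow_nonneg (by linarith [hτ.2]) _
      have : (t - τ) ^ (γ - 1) * k (t - τ) * f τ - (t - τ) ^ (γ - 1) * c
          = (t - τ) ^ (γ - 1) * (k (t - τ) * f τ - c) := by ring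
      rw [this, Real.norm_eq_abs, abs_mul, abs_of_nonneg h1]
      exact mul_le_mul_of_nonneg_left (hprod τ hτ) h1
    have h := intervalIntegral.norm_integral_le_abs_of_norm_le hae (hbint.mul_const ε')
    rw [Real.norm_eq_abs] at h
    refine h.trans ?_
    rw [intervalIntegral.integral_mul_const, base_val hγ0,
      abs_of_nonneg (by positivity : (0:ℝ) ≤ t ^ γ / γ * ε')]
    ring_nf; exact le_rfl
  rw [Real.dist_eq]
  have heq : (∫ τ in (0:ℝ)..t, (t - τ) ^ (γ - 1) * k (t - τ) * f τ) / t ^ γ - c / γ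
      = ((∫ τ in (0:ℝ)..t, (t - τ) ^ (γ - 1) * k (t - τ) * f τ) - c * (t ^ γ / γ)) / t ^ γ := by
    field_simp
  rw [heq, abs_div, abs_of_pos htγ]
  have : ε' * (t ^ γ / γ) / t ^ γ = ε / 2 := by
    rw [hε'def]; field_simp
  calc |(∫ τ in (0:ℝ)..t, (t - τ) ^ (γ - 1) * k (t - τ) * f τ) - c * (t ^ γ / γ)| / t ^ γ
      ≤ ε' * (t ^ γ / γ) / t ^ γ := by gcongr
    _ = ε / 2 := this
    _ < ε := by linarith

/-- Lemma 3.2 (recovery of a weaker singularity order): for bounded continuous `f, k`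
with `f 0 ≠ 0`, `k 0 ≠ 0`, and `G(t) = ∫₀ᵗ (t-τ)^(γ-1) k(t-τ) f(τ) dτ`,
one has `G(λ t)/G(t) → λ^γ` as `t → 0⁺`. -/
theorem lim_ratio_conv (T γ lam : ℝ) (hT : 0 < T)
    (hγ : γ ∈ Set.Ioo (0:ℝ) 1) (hlam : lam ∈ Set.Ioo (0:ℝ) 1)
    (f k : ℝ → ℝ)
    (hf : ContinuousOn f (Set.Icc 0 T)) (hk : ContinuousOn k (Set.Icc 0 T))
    (hfb : ∃ M, ∀ t ∈ Set.Icc (0:ℝ) T, |f t| ≤ M)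
    (hkb : ∃ M, ∀ t ∈ Set.Icc (0:ℝ) T, |k t| ≤ M)
    (hf0 : f 0 ≠ 0) (hk0 : k 0 ≠ 0) :
    Filter.Tendsto
      (fun t : ℝ =>
        (∫ τ in (0:ℝ)..(lam * t), (lam * t - τ) ^ (γ - 1) * k (lam * t - τ) * f τ) /
        (∫ τ in (0:ℝ)..t, (t - τ) ^ (γ - 1) * k (t - τ) * f τ))
      (nhdsWithin 0 (Set.Ioi 0)) (nhds (lam ^ γ)) := by
  obtain ⟨Mf, hfb⟩ := hfb
  obtain ⟨Mk, hkb⟩ := hkb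
  obtain ⟨hγ0, hγ1⟩ := hγ
  obtain ⟨hl0, hl1⟩ := hlam
  have haux := aux_tendsto hT hγ0 hγ1 hf hk hfb hkb
  have hc : k 0 * f 0 / γ ≠ 0 := div_ne_zero (mul_ne_zero hk0 hf0) (ne_of_gt hγ0)
  have hmap : Tendsto (fun t : ℝ => lam * t) (𝓝[>] (0:ℝ)) (𝓝[>] (0:ℝ)) := by
    rw [tendsto_nhdsWithin_iff]
    constructor
    · have h : Tendsto (fun t : ℝ => lam * t) (𝓝 0) (𝓝 (lam * 0)) :=
        ((continuous_const.mul continuous_id).tendsto (0:ℝ))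
      simpa using h.mono_left nhdsWithin_le_nhds
    · filter_upwards [self_mem_nhdsWithin] with x hx
      exact mul_pos hl0 hx
  have h2 := haux.comp hmap
  have hF := (h2.mul (tendsto_const_nhds (x := lam ^ γ))).mul (haux.inv₀ hc)
  have hval : k 0 * f 0 / γ * lam ^ γ * (k 0 * f 0 / γ)⁻¹ = lam ^ γ := by
    field_simp
  rw [hval] at hF
  refine Tendsto.congr' ?_ hF
  filter_upwards [self_mem_nhdsWithin] with t ht
  have ht : (0:ℝ) < t := ht
  have hpq : (lam * t) ^ γ = lam ^ γ * t ^ γ := Real.mul_rpow hl0.le ht.le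
  have hne : lam ^ γ * t ^ γ ≠ 0 := by positivity
  simp only [Function.comp]
  rw [hpq, inv_div]
  set a := ∫ τ in (0:ℝ)..(lam * t), (lam * t - τ) ^ (γ - 1) * k (lam * t - τ) * f τ
  set b := ∫ τ in (0:ℝ)..t, (t - τ) ^ (γ - 1) * k (t - τ) * f τ
  have : a / (lam ^ γ * t ^ γ) * lam ^ γ * (t ^ γ / b)
      = (lam ^ γ * t ^ γ) * a / ((lam ^ γ * t ^ γ) * b) := by ring
  rw [this, mul_div_mul_left a b hne]
end

section
/- Let θ ∈ (0,1), T > 0, and let v, a, f₀ : [0,T] → ℝ be continuous. Set F₀(t) = a(t) v(t) + f₀(t) and suppose (ω_θ * v)(t) = F₀(t) for all t ∈ [0,T], where ω_θ(t) = t^{θ−1}/Γ(θ). If there exists n* ∈ ℕ, n* ≥ 1, with v(0)/n* + F₀(0) ≠ 0, then for every λ ∈ (0,1), lim_{t→0⁺} F₀(λt)/F₀(t) exists with absolute value λ^θ, and θ = log_λ | lim_{t→0⁺} F₀(λt)/F₀(t) |. -/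
open MeasureTheory Real Set Filter Topology

/-- The weakly singular kernel `ω_θ(t) = t^(θ-1) / Γ(θ)`. -/
noncomputable def omegaK (θ t : ℝ) : ℝ := t ^ (θ - 1) / Real.Gamma θ

lemma aux_integrable {θ : ℝ} (hθ : 0 < θ) (t : ℝ) :
    IntervalIntegrable (fun s => (t - s) ^ (θ - 1)) volume 0 t := by
  have h := (intervalIntegral.intervalIntegrable_rpow' (a := 0) (b := t)
    (r := θ - 1) (by linarith)).comp_sub_left t
  simpa using h.symm

lemma aux_eval {θ : ℝ} (hθ : 0 < θ) (t : ℝ) :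
    (∫ s in (0:ℝ)..t, (t - s) ^ (θ - 1)) = t ^ θ / θ := by
  rw [intervalIntegral.integral_comp_sub_left (fun s => s ^ (θ - 1)) t]
  simp only [sub_self, sub_zero]
  rw [integral_rpow (Or.inl (by linarith))]
  rw [Real.zero_rpow (by linarith : θ - 1 + 1 ≠ 0)]
  simp [sub_add_cancel]

lemma key_tendsto (θ T : ℝ) (hθ : θ ∈ Set.Ioo (0:ℝ) 1) (hT : 0 < T)
    (v F₀ : ℝ → ℝ) (hv : ContinuousOn v (Set.Icc 0 T))
    (hconv : ∀ t ∈ Set.Icc (0:ℝ) T,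
      (∫ s in (0:ℝ)..t, omegaK θ (t - s) * v s) = F₀ t) :
    Tendsto (fun t => F₀ t / t ^ θ) (nhdsWithin 0 (Set.Ioi 0))
      (nhds (v 0 / (θ * Real.Gamma θ))) := by
  obtain ⟨hθ0, hθ1⟩ := hθ
  have hΓ : 0 < Real.Gamma θ := Real.Gamma_pos_of_pos hθ0
  rw [Metric.tendsto_nhdsWithin_nhds]
  intro ε hε
  set ε' : ℝ := ε * θ * Real.Gamma θ / 2 with hε'def
  have hε' : 0 < ε' := by positivity
  have hvc : ContinuousWithinAt v (Set.Icc 0 T) 0 :=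
    hv 0 ⟨le_rfl, hT.le⟩
  rw [ContinuousWithinAt, Metric.tendsto_nhdsWithin_nhds] at hvc
  obtain ⟨δ₁, hδ₁, hδ₁'⟩ := hvc ε' hε'
  refine ⟨min δ₁ T, lt_min hδ₁ hT, ?_⟩
  intro t ht hdist
  have ht0 : 0 < t := ht
  have htδ : t < δ₁ := by
    rw [Real.dist_eq, sub_zero, abs_of_pos ht0] at hdist
    exact lt_of_lt_of_le hdist (min_le_left _ _)
  have htT : t ≤ T := by
    rw [Real.dist_eq, sub_zero, abs_of_pos ht0] at hdist
    exact le_of_lt (lt_of_lt_of_le hdist (min_le_right _ _))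
  have htmem : t ∈ Set.Icc (0:ℝ) T := ⟨ht0.le, htT⟩
  have htp : (0:ℝ) < t ^ θ := Real.rpow_pos_of_pos ht0 θ
  -- integrability facts
  have hA : IntervalIntegrable (fun s => (t - s) ^ (θ - 1)) volume 0 t :=
    aux_integrable hθ0 t
  have huIcc : Set.uIcc (0:ℝ) t = Set.Icc 0 t := Set.uIcc_of_le ht0.le
  have hvsub : ContinuousOn v (Set.uIcc (0:ℝ) t) := by
    rw [huIcc]; exact hv.mono (Set.Icc_subset_Icc le_rfl htT)
  have hI1 : IntervalIntegrable (fun s => (t - s) ^ (θ - 1) * v s) volume 0 t :=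
    hA.mul_continuousOn hvsub
  have hI2 : IntervalIntegrable (fun s => (t - s) ^ (θ - 1) * (v s - v 0)) volume 0 t :=
    hA.mul_continuousOn (hvsub.sub continuousOn_const)
  -- express F₀ t
  have hF₀t : F₀ t = (∫ s in (0:ℝ)..t, (t - s) ^ (θ - 1) * v s) / Real.Gamma θ := by
    rw [← hconv t htmem]
    rw [← intervalIntegral.integral_div]
    congr 1; ext s; rw [omegaK]; ring
  -- the remainder integral
  set R : ℝ := ∫ s in (0:ℝ)..t, (t - s) ^ (θ - 1) * (v s - v 0) with hRdef
  have hsplit : (∫ s in (0:ℝ)..t, (t - s) ^ (θ - 1) * v s)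
      = v 0 * (t ^ θ / θ) + R := by
    have h1 : R = (∫ s in (0:ℝ)..t, (t - s) ^ (θ - 1) * v s)
        - ∫ s in (0:ℝ)..t, (t - s) ^ (θ - 1) * v 0 := by
      rw [hRdef, ← intervalIntegral.integral_sub hI1 (hA.mul_const (v 0))]
      congr 1; ext s; ring
    have h2 : (∫ s in (0:ℝ)..t, (t - s) ^ (θ - 1) * v 0) = v 0 * (t ^ θ / θ) := by
      rw [intervalIntegral.integral_mul_const, aux_eval hθ0 t]; ring
    rw [h1, h2]; ring
  -- bound on R
  have hRbound : |R| ≤ ε' * (t ^ θ / θ) := by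
    have hb : ∀ᵐ s ∂(volume.restrict (Set.uIoc (0:ℝ) t)),
        ‖(t - s) ^ (θ - 1) * (v s - v 0)‖ ≤ (t - s) ^ (θ - 1) * ε' := by
      refine (ae_restrict_iff' measurableSet_uIoc).2 (Filter.Eventually.of_forall ?_)
      intro s hs
      rw [Set.uIoc_of_le ht0.le] at hs
      obtain ⟨hs0, hst⟩ := hs
      have hpow : (0:ℝ) ≤ (t - s) ^ (θ - 1) :=
        Real.rpow_nonneg (by linarith) _
      rw [norm_mul, Real.norm_eq_abs, Real.norm_eq_abs, abs_of_nonneg hpow]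
      refine mul_le_mul_of_nonneg_left ?_ hpow
      have hsmem : s ∈ Set.Icc (0:ℝ) T := ⟨hs0.le, le_trans hst htT⟩
      have : dist s 0 < δ₁ := by
        rw [Real.dist_eq, sub_zero, abs_of_pos hs0]
        exact lt_of_le_of_lt hst htδ
      have := hδ₁' hsmem this
      rw [Real.dist_eq] at this
      exact this.le
    have := intervalIntegral.norm_integral_le_abs_of_norm_le hb (hA.mul_const ε')
    rw [Real.norm_eq_abs] at this
    calc |R| ≤ |∫ s in (0:ℝ)..t, (t - s) ^ (θ - 1) * ε'| := this
      _ = ε' * (t ^ θ / θ) := by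
          rw [intervalIntegral.integral_mul_const, aux_eval hθ0 t,
            abs_of_nonneg (by positivity)]
          ring
  -- conclude
  have hdiff : F₀ t / t ^ θ - v 0 / (θ * Real.Gamma θ) = R / (Real.Gamma θ * t ^ θ) := by
    rw [hF₀t, hsplit]
    field_simp
    ring
  rw [Real.dist_eq, hdiff]
  have : |R / (Real.Gamma θ * t ^ θ)| = |R| / (Real.Gamma θ * t ^ θ) := by
    rw [abs_div, abs_of_pos (mul_pos hΓ htp)]
  rw [this]
  have hle : |R| / (Real.Gamma θ * t ^ θ) ≤ ε / 2 := by
    rw [div_le_iff₀ (by positivity)]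
    calc |R| ≤ ε' * (t ^ θ / θ) := hRbound
      _ = ε / 2 * (Real.Gamma θ * t ^ θ) := by
          rw [hε'def]; field_simp
  linarith

/-- Lemma 4.1: if `(ω_θ * v)(t) = F₀(t) = a(t) v(t) + f₀(t)` on `[0,T]` and
`v(0)/n* + F₀(0) ≠ 0` for some positive integer `n*`, then for every `λ ∈ (0,1)`
the limit of `F₀(λt)/F₀(t)` as `t → 0⁺` exists with absolute value `λ^θ`, and
`θ = log_λ |lim|`. -/
theorem order_recovery (θ T : ℝ) (hθ : θ ∈ Set.Ioo (0:ℝ) 1) (hT : 0 < T)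
    (v a f₀ F₀ : ℝ → ℝ)
    (hv : ContinuousOn v (Set.Icc 0 T))
    (ha : ContinuousOn a (Set.Icc 0 T))
    (hf₀ : ContinuousOn f₀ (Set.Icc 0 T))
    (hF : ∀ t ∈ Set.Icc (0:ℝ) T, F₀ t = a t * v t + f₀ t)
    (hconv : ∀ t ∈ Set.Icc (0:ℝ) T,
      (∫ s in (0:ℝ)..t, omegaK θ (t - s) * v s) = F₀ t)
    (hn : ∃ n : ℕ, 1 ≤ n ∧ v 0 / (n:ℝ) + F₀ 0 ≠ 0) :
    ∀ lam ∈ Set.Ioo (0:ℝ) 1, ∃ L : ℝ,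
      Filter.Tendsto (fun t => F₀ (lam * t) / F₀ t) (nhdsWithin 0 (Set.Ioi 0)) (nhds L) ∧
      |L| = lam ^ θ ∧ θ = Real.log |L| / Real.log lam := by
  obtain ⟨hθ0, hθ1⟩ := hθ
  intro lam ⟨hlam0, hlam1⟩
  have hΓ : 0 < Real.Gamma θ := Real.Gamma_pos_of_pos hθ0
  -- F₀ 0 = 0
  have hF00 : F₀ 0 = 0 := by
    have := hconv 0 ⟨le_rfl, hT.le⟩
    simpa using this.symm
  -- v 0 ≠ 0
  have hv0 : v 0 ≠ 0 := by
    obtain ⟨n, hn1, hne⟩ := hn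
    rw [hF00, add_zero] at hne
    intro h; apply hne; rw [h, zero_div]
  set c : ℝ := v 0 / (θ * Real.Gamma θ) with hc
  have hcne : c ≠ 0 := div_ne_zero hv0 (by positivity)
  have hG : Tendsto (fun t => F₀ t / t ^ θ) (nhdsWithin 0 (Set.Ioi 0)) (nhds c) :=
    key_tendsto θ T ⟨hθ0, hθ1⟩ hT v F₀ hv hconv
  -- scaling map tends to 0⁺
  have hscale : Tendsto (fun t : ℝ => lam * t) (nhdsWithin 0 (Set.Ioi 0))
      (nhdsWithin 0 (Set.Ioi 0)) := by
    apply tendsto_nhdsWithin_of_tendsto_nhds_of_eventually_within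
    · have : Tendsto (fun t : ℝ => lam * t) (nhds 0) (nhds 0) :=
        (continuous_mul_left lam).tendsto' 0 0 (mul_zero lam)
      exact this.mono_left nhdsWithin_le_nhds
    · filter_upwards [self_mem_nhdsWithin] with t ht
      exact mul_pos hlam0 ht
  have hG2 : Tendsto (fun t => F₀ (lam * t) / (lam * t) ^ θ)
      (nhdsWithin 0 (Set.Ioi 0)) (nhds c) := hG.comp hscale
  have hratio : Tendsto (fun t => (F₀ (lam * t) / (lam * t) ^ θ) / (F₀ t / t ^ θ) * lam ^ θ)
      (nhdsWithin 0 (Set.Ioi 0)) (nhds (lam ^ θ)) := by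
    have := (hG2.div hG hcne).mul_const (lam ^ θ)
    simpa [div_self hcne] using this
  have hcongr : ∀ᶠ t in nhdsWithin 0 (Set.Ioi 0),
      (F₀ (lam * t) / (lam * t) ^ θ) / (F₀ t / t ^ θ) * lam ^ θ
        = F₀ (lam * t) / F₀ t := by
    filter_upwards [self_mem_nhdsWithin] with t ht
    have ht0 : (0:ℝ) < t := ht
    have htp : (0:ℝ) < t ^ θ := Real.rpow_pos_of_pos ht0 θ
    have hlp : (0:ℝ) < lam ^ θ := Real.rpow_pos_of_pos hlam0 θ
    have hmul : (lam * t) ^ θ = lam ^ θ * t ^ θ :=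
      Real.mul_rpow hlam0.le ht0.le
    rw [div_div_div_comm, hmul]
    rw [show lam ^ θ * t ^ θ / t ^ θ = lam ^ θ by field_simp]
    exact div_mul_cancel₀ _ (ne_of_gt hlp)
  refine ⟨lam ^ θ, ?_, ?_, ?_⟩
  · exact hratio.congr' (by filter_upwards [hcongr] with t h using h)
  · exact abs_of_pos (Real.rpow_pos_of_pos hlam0 θ)
  · rw [abs_of_pos (Real.rpow_pos_of_pos hlam0 θ), Real.log_rpow hlam0]
    have hlog : Real.log lam ≠ 0 := ne_of_lt (Real.log_neg hlam0 hlam1)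
    field_simp
end

section
/- Let R : [0,T] → ℝ be continuously differentiable and W : [0,T] → ℝ continuous with continuous Caputo derivative D_t^{ν₁} W, ν₁ ∈ (0,1). Define J(t) = ∫₀ᵗ (R(t)−R(s)) (t−s)^{−1−ν₁} (W(s)−W(0)) ds. If |W(s)−W(0)| ≤ K s^{ν₁} for all s ∈ [0,T] (K > 0), then |J(t)| ≤ C ‖R‖_{C¹([0,T])} K t for all t ∈ [0,T], where C depends only on ν₁; in particular J(0) = 0 and J is continuous at 0. -/
open MeasureTheory Real Set Filter Topology

/-- The (regularized) Caputo fractional derivative of order `μ ∈ (0,1)`. -/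
noncomputable def caputo (μ : ℝ) (w : ℝ → ℝ) (t : ℝ) : ℝ :=
  (1 / Real.Gamma (1 - μ)) *
    deriv (fun τ => ∫ s in (0:ℝ)..τ, (w s - w 0) * (τ - s) ^ (-μ)) t

/-- `C¹` norm of `R` on `[0,T]`. -/
noncomputable def c1normOn (R : ℝ → ℝ) (T : ℝ) : ℝ :=
  sSup ((fun t => |R t|) '' Set.Icc 0 T) + sSup ((fun t => |deriv R t|) '' Set.Icc 0 T)

/-- The remainder term `J(t) = ∫₀ᵗ (R(t)-R(s))(t-s)^(-1-ν₁)(W(s)-W(0)) ds` in the Caputo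
product formula satisfies `|J(t)| ≤ C ‖R‖_{C¹} K t` with `C` depending only on `ν₁`;
in particular `J(0) = 0`. -/
theorem remainder_term_bound (ν₁ : ℝ) (hν : ν₁ ∈ Set.Ioo (0:ℝ) 1) :
    ∃ C > 0, ∀ (T K : ℝ) (R W : ℝ → ℝ), 0 < T → 0 < K →
      ContDiff ℝ 1 R →
      ContinuousOn W (Set.Icc 0 T) →
      ContinuousOn (caputo ν₁ W) (Set.Icc 0 T) →
      (∀ s ∈ Set.Icc (0:ℝ) T, |W s - W 0| ≤ K * s ^ ν₁) →
      (∀ t ∈ Set.Icc (0:ℝ) T,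
        |∫ s in (0:ℝ)..t, (R t - R s) * (t - s) ^ (-1 - ν₁) * (W s - W 0)| ≤
          C * c1normOn R T * K * t) ∧
      (∫ s in (0:ℝ)..(0:ℝ), (R 0 - R s) * ((0:ℝ) - s) ^ (-1 - ν₁) * (W s - W 0)) = 0 := by
  obtain ⟨hν0, hν1⟩ := hν
  have h1ν : (0:ℝ) < 1 - ν₁ := by linarith
  refine ⟨1 / (1 - ν₁), by positivity, ?_⟩
  intro T K R W hT hK hR hW _ hWb
  refine ⟨?_, by simp⟩
  intro t ht
  rcases eq_or_lt_of_le ht.1 with h0 | h0t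
  · simp [← h0]
  set M := sSup ((fun x => |deriv R x|) '' Set.Icc 0 T) with hMdef
  have hcomp : IsCompact (Set.Icc (0:ℝ) T) := isCompact_Icc
  have hRc : ContinuousOn R (Set.Icc 0 T) := hR.continuous.continuousOn
  have hR'c : ContinuousOn (fun x => |deriv R x|) (Set.Icc 0 T) :=
    ((hR.continuous_deriv le_rfl).abs).continuousOn
  have hbdd2 : BddAbove ((fun x => |deriv R x|) '' Set.Icc 0 T) :=
    (hcomp.image_of_continuousOn hR'c).bddAbove
  have hbdd1 : BddAbove ((fun x => |R x|) '' Set.Icc 0 T) :=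
    (hcomp.image_of_continuousOn hRc.abs).bddAbove
  have hmem0 : (0:ℝ) ∈ Set.Icc (0:ℝ) T := ⟨le_rfl, hT.le⟩
  have hM_le : M ≤ c1normOn R T := by
    have h1 : (0:ℝ) ≤ sSup ((fun t => |R t|) '' Set.Icc 0 T) :=
      le_trans (abs_nonneg (R 0)) (le_csSup hbdd1 ⟨0, hmem0, rfl⟩)
    unfold c1normOn; linarith
  have hM0 : 0 ≤ M := le_trans (abs_nonneg _) (le_csSup hbdd2 ⟨0, hmem0, rfl⟩)
  -- Lipschitz bound
  have hlip : ∀ s ∈ Set.Icc (0:ℝ) T, |R t - R s| ≤ M * |t - s| := by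
    intro s hs
    have h := Convex.norm_image_sub_le_of_norm_deriv_le
      (f := R) (s := Set.Icc (0:ℝ) T)
      (fun x _ => (hR.differentiable one_ne_zero).differentiableAt)
      (fun x hx => le_csSup hbdd2 ⟨x, hx, rfl⟩) (convex_Icc 0 T) hs ht
    simpa [Real.norm_eq_abs] using h
  -- bound function
  set g : ℝ → ℝ := fun s => M * K * (t ^ ν₁ * (t - s) ^ (-ν₁)) with hg
  have hint : IntervalIntegrable (fun s => (t - s) ^ (-ν₁)) volume 0 t := by
    have h := (intervalIntegral.intervalIntegrable_rpow'
      (r := -ν₁) (by linarith) (a := 0) (b := t)).comp_sub_left t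
    simpa using h.symm
  have hgint : IntervalIntegrable g volume 0 t := by
    have h := hint.const_mul (M * K * t ^ ν₁)
    simpa [hg, mul_assoc] using h
  have hboundae : ∀ᵐ s ∂volume, s ∈ Set.uIoc (0:ℝ) t →
      ‖(R t - R s) * (t - s) ^ (-1 - ν₁) * (W s - W 0)‖ ≤ g s := by
    refine Filter.Eventually.of_forall ?_
    intro s hs
    rw [Set.uIoc_of_le h0t.le] at hs
    obtain ⟨hs0, hst⟩ := hs
    have hsT : s ∈ Set.Icc (0:ℝ) T := ⟨hs0.le, hst.trans ht.2⟩
    rcases eq_or_lt_of_le hst with heq | hlt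
    · rw [heq]
      simp only [Real.norm_eq_abs, hg, sub_self,
        Real.zero_rpow (ne_of_lt (by linarith : (-1 - ν₁) < 0)),
        Real.zero_rpow (ne_of_lt (by linarith : (-ν₁) < 0))]
      simp
    · have hts : 0 < t - s := by linarith
      have hRb : |R t - R s| ≤ M * (t - s) := by
        have := hlip s hsT
        rwa [abs_of_pos hts] at this
      have hWs : |W s - W 0| ≤ K * s ^ ν₁ := hWb s hsT
      have hsν : s ^ ν₁ ≤ t ^ ν₁ := Real.rpow_le_rpow hs0.le hst hν0.le
      have hpow : (t - s) ^ (-1 - ν₁) = (t - s) ^ (-ν₁) * (t - s)⁻¹ := by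
        rw [show (-1 - ν₁) = -ν₁ + (-1) by ring, Real.rpow_add hts, Real.rpow_neg_one]
      have hpw : |(t - s) ^ (-1 - ν₁)| = (t - s) ^ (-1 - ν₁) :=
        abs_of_nonneg (Real.rpow_nonneg hts.le _)
      rw [Real.norm_eq_abs, abs_mul, abs_mul, hpw]
      calc |R t - R s| * (t - s) ^ (-1 - ν₁) * |W s - W 0|
          ≤ (M * (t - s)) * (t - s) ^ (-1 - ν₁) * (K * s ^ ν₁) := by
            apply mul_le_mul
            · exact mul_le_mul_of_nonneg_right hRb (Real.rpow_nonneg hts.le _)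
            · exact hWs
            · exact abs_nonneg _
            · positivity
        _ = M * K * (s ^ ν₁ * (t - s) ^ (-ν₁)) := by
            rw [hpow]; field_simp
        _ ≤ g s := by
            simp only [hg]
            have hmm : s ^ ν₁ * (t - s) ^ (-ν₁) ≤ t ^ ν₁ * (t - s) ^ (-ν₁) :=
              mul_le_mul_of_nonneg_right hsν (Real.rpow_nonneg hts.le _)
            nlinarith [mul_nonneg hM0 hK.le]
  have hkey : |∫ s in (0:ℝ)..t, (R t - R s) * (t - s) ^ (-1 - ν₁) * (W s - W 0)| ≤
      |∫ s in (0:ℝ)..t, g s| := by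
    have hb2 : ∀ᵐ s ∂(volume.restrict (Set.uIoc (0:ℝ) t)),
        ‖(R t - R s) * (t - s) ^ (-1 - ν₁) * (W s - W 0)‖ ≤ g s :=
      (ae_restrict_iff' measurableSet_uIoc).2 hboundae
    have h := intervalIntegral.norm_integral_le_abs_of_norm_le hb2 hgint
    simpa [Real.norm_eq_abs] using h
  have hcalc : (∫ s in (0:ℝ)..t, g s) = M * K * t / (1 - ν₁) := by
    have h1 : (∫ s in (0:ℝ)..t, g s)
        = M * K * ∫ s in (0:ℝ)..t, t ^ ν₁ * (t - s) ^ (-ν₁) := by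
      rw [hg, intervalIntegral.integral_const_mul]
    have h1' : (∫ s in (0:ℝ)..t, t ^ ν₁ * (t - s) ^ (-ν₁))
        = t ^ ν₁ * ∫ s in (0:ℝ)..t, (t - s) ^ (-ν₁) :=
      intervalIntegral.integral_const_mul _ _
    have h2 : (∫ s in (0:ℝ)..t, (t - s) ^ (-ν₁)) = ∫ u in (0:ℝ)..t, u ^ (-ν₁) := by
      have h := intervalIntegral.integral_comp_sub_left (a := 0) (b := t)
        (fun u => u ^ (-ν₁)) t
      simpa using h
    have h3 : (∫ u in (0:ℝ)..t, u ^ (-ν₁)) = t ^ (1 - ν₁) / (1 - ν₁) := by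
      rw [integral_rpow (Or.inl (by linarith))]
      rw [Real.zero_rpow (ne_of_gt (by linarith : (0:ℝ) < -ν₁ + 1))]
      ring_nf
    have h4 : t ^ ν₁ * t ^ (1 - ν₁) = t := by
      rw [← Real.rpow_add h0t]; simp
    rw [h1, h1', h2, h3, ← mul_div_assoc, h4, mul_div_assoc]
  have hfinal : M * K * t / (1 - ν₁) ≤ 1 / (1 - ν₁) * c1normOn R T * K * t := by
    have hmk : M * K * t ≤ c1normOn R T * K * t :=
      mul_le_mul_of_nonneg_right (mul_le_mul_of_nonneg_right hM_le hK.le) h0t.le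
    have : 1 / (1 - ν₁) * c1normOn R T * K * t = (c1normOn R T * K * t) / (1 - ν₁) := by
      ring
    rw [this]
    exact (div_le_div_iff_of_pos_right h1ν).mpr hmk
  calc |∫ s in (0:ℝ)..t, (R t - R s) * (t - s) ^ (-1 - ν₁) * (W s - W 0)|
      ≤ |∫ s in (0:ℝ)..t, g s| := hkey
    _ = M * K * t / (1 - ν₁) := by
        rw [hcalc]; exact abs_of_nonneg (by positivity)
    _ ≤ 1 / (1 - ν₁) * c1normOn R T * K * t := hfinal
end
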